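/- Let g be a Lie algebra over a field k of characteristic zero and let X ∈ U(g)⊗U(g) lie in the image of g⊗g, be antisymmetric (τ(X) = −X) and g-invariant ([Δ(x), X] = 0 for all x ∈ g). Then in U(g)⊗U(g)⊗U(g) one has [X₁₃, X₂₃] = 0, where X₁₃ = (id⊗τ)(X⊗1) and X₂₃ = 1⊗X. -/

import Mathlib

open TensorProduct

noncomputable section

variable (k : Type*) [Field k] [CharZero k]
variable (g : Type*) [LieRing g] [LieAlgebra k g]

attribute [local instance] LieRing.ofAssociativeRing

/-- The canonical linear map `g → U(g)`. -/
def ιU : g →ₗ[k] UniversalEnvelopingAlgebra k g :=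
  (UniversalEnvelopingAlgebra.ι k).toLinearMap

/-- The canonical map `g ⊗ g → U(g) ⊗ U(g)`; its range is "the image of `g ⊗ g`". -/
def ιι : g ⊗[k] g →ₗ[k]
    UniversalEnvelopingAlgebra k g ⊗[k] UniversalEnvelopingAlgebra k g :=
  TensorProduct.map (ιU k g) (ιU k g)

/-- The flip automorphism of `U(g) ⊗ U(g)`. -/
def τU : UniversalEnvelopingAlgebra k g ⊗[k] UniversalEnvelopingAlgebra k g ≃ₐ[k]
    UniversalEnvelopingAlgebra k g ⊗[k] UniversalEnvelopingAlgebra k g :=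
  Algebra.TensorProduct.comm k _ _

/-- The associator for `U(g)`. -/
def αU : (UniversalEnvelopingAlgebra k g ⊗[k] UniversalEnvelopingAlgebra k g) ⊗[k]
      UniversalEnvelopingAlgebra k g ≃ₐ[k]
    UniversalEnvelopingAlgebra k g ⊗[k]
      (UniversalEnvelopingAlgebra k g ⊗[k] UniversalEnvelopingAlgebra k g) :=
  Algebra.TensorProduct.assoc k k k _ _ _

/-- The alternation `Alt₂(X) = ½(X − τ(X))`. -/
def alt2 (X : UniversalEnvelopingAlgebra k g ⊗[k] UniversalEnvelopingAlgebra k g) :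
    UniversalEnvelopingAlgebra k g ⊗[k] UniversalEnvelopingAlgebra k g :=
  (2 : k)⁻¹ • (X - τU k g X)

variable {g} in
/-- `X` is an additive 2-cocycle: `1⊗X + (id⊗Δ)(X) = X⊗1 + (Δ⊗id)(X)`. -/
def IsAdd2Cocycle
    (Δ : UniversalEnvelopingAlgebra k g →ₐ[k]
      UniversalEnvelopingAlgebra k g ⊗[k] UniversalEnvelopingAlgebra k g)
    (X : UniversalEnvelopingAlgebra k g ⊗[k] UniversalEnvelopingAlgebra k g) : Prop :=
  (1 : UniversalEnvelopingAlgebra k g) ⊗ₜ[k] X +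
      Algebra.TensorProduct.map (AlgHom.id k (UniversalEnvelopingAlgebra k g)) Δ X =
    αU k g (X ⊗ₜ[k] (1 : UniversalEnvelopingAlgebra k g) +
      Algebra.TensorProduct.map Δ (AlgHom.id k (UniversalEnvelopingAlgebra k g)) X)

/-- `r₁₂ = r ⊗ 1` in `U(g)^{⊗3}`. -/
def u12 (r : UniversalEnvelopingAlgebra k g ⊗[k] UniversalEnvelopingAlgebra k g) :
    UniversalEnvelopingAlgebra k g ⊗[k]
      (UniversalEnvelopingAlgebra k g ⊗[k] UniversalEnvelopingAlgebra k g) :=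
  αU k g (r ⊗ₜ[k] (1 : UniversalEnvelopingAlgebra k g))

/-- `r₂₃ = 1 ⊗ r` in `U(g)^{⊗3}`. -/
def u23 (r : UniversalEnvelopingAlgebra k g ⊗[k] UniversalEnvelopingAlgebra k g) :
    UniversalEnvelopingAlgebra k g ⊗[k]
      (UniversalEnvelopingAlgebra k g ⊗[k] UniversalEnvelopingAlgebra k g) :=
  (1 : UniversalEnvelopingAlgebra k g) ⊗ₜ[k] r

/-- `r₁₃ = (id ⊗ τ)(r ⊗ 1)` in `U(g)^{⊗3}`. -/
def u13 (r : UniversalEnvelopingAlgebra k g ⊗[k] UniversalEnvelopingAlgebra k g) :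
    UniversalEnvelopingAlgebra k g ⊗[k]
      (UniversalEnvelopingAlgebra k g ⊗[k] UniversalEnvelopingAlgebra k g) :=
  Algebra.TensorProduct.map (AlgHom.id k (UniversalEnvelopingAlgebra k g)) (τU k g).toAlgHom
    (αU k g (r ⊗ₜ[k] (1 : UniversalEnvelopingAlgebra k g)))

local notation "Ug" => UniversalEnvelopingAlgebra k g

/-! `X` commutes with `Δ(ι x)`, hence with all of `Δ(U(g))`. So `1 ⊗ X` commutes with
`(id ⊗ Δ)(X) = X₁₂ + X₁₃`, and `X ⊗ 1` with `(Δ ⊗ id)(X)`, which re-associates to `X₁₃ + X₂₃`;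
swapping the last two legs and using `τ(X) = -X` turns the latter into `[X₁₂ - X₂₃, X₁₃] = 0`.
These three linear relations between `[X₁₂, X₁₃]`, `[X₁₃, X₂₃]`, `[X₁₂, X₂₃]` give
`2 [X₁₃, X₂₃] = 0`. -/

namespace Algebra.TensorProduct

variable {R A B C D : Type*} [CommSemiring R] [Semiring A] [Algebra R A] [Semiring B]
  [Algebra R B] [Semiring C] [Algebra R C] [Semiring D] [Algebra R D]

theorem commute_map_tmul {f : A →ₐ[R] C} {f' : B →ₐ[R] D} {c : C} {d : D}
    (hf : ∀ a, Commute (f a) c) (hf' : ∀ b, Commute (f' b) d) (y : A ⊗[R] B) :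
    Commute (map f f' y) (c ⊗ₜ d) := by
  induction y using TensorProduct.induction_on with
  | zero => simp
  | tmul a b => simpa only [map_tmul] using (hf a).tmul (hf' b)
  | add y y' hy hy' => simpa only [map_add] using hy.add_left hy'

end Algebra.TensorProduct

theorem lie_eq_zero_of_lie_add_eq_zero {M : Type*} [LieRing M] [IsAddTorsionFree M] {P Q R : M}
    (h₁ : ⁅P + Q, R⁆ = 0) (h₂ : ⁅Q + R, P⁆ = 0) (h₃ : ⁅P - R, Q⁆ = 0) : ⁅Q, R⁆ = 0 := by
  have h : 2 • ⁅Q, R⁆ = ⁅P + Q, R⁆ + ⁅Q + R, P⁆ + ⁅P - R, Q⁆ := by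
    rw [add_lie, add_lie, sub_lie, ← lie_skew Q P, ← lie_skew R P, ← lie_skew R Q]
    abel
  rw [h₁, h₂, h₃, add_zero, add_zero] at h
  exact nsmul_right_injective two_ne_zero (h.trans (smul_zero 2).symm)

namespace UniversalEnvelopingAlgebra

variable {R L A : Type*} [CommRing R] [LieRing L] [LieAlgebra R L] [Ring A] [Algebra R A]

theorem commute_of_commute_ι {f : UniversalEnvelopingAlgebra R L →ₐ[R] A} {a : A}
    (h : ∀ x, Commute (f (ι R x)) a) (u : UniversalEnvelopingAlgebra R L) : Commute (f u) a := by
  obtain ⟨t, rfl⟩ : ∃ t, mkAlgHom R L t = u := RingCon.mkₐ_surjective _ u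
  induction t using TensorAlgebra.induction with
  | algebraMap r => simpa only [AlgHom.commutes] using Algebra.commute_algebraMap_left r a
  | ι x => simpa only [ι_apply] using h x
  | mul t t' ht ht' => simpa only [map_mul] using ht.mul_left ht'
  | add t t' ht ht' => simpa only [map_add] using ht.add_left ht'

end UniversalEnvelopingAlgebra

section

variable {K L : Type*} [Field K] [LieRing L] [LieAlgebra K L]

local notation "𝒰" => UniversalEnvelopingAlgebra K L

theorem u12_add (r s : 𝒰 ⊗[K] 𝒰) : u12 K L (r + s) = u12 K L r + u12 K L s := by
  simp only [u12, add_tmul, map_add]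

theorem u13_add (r s : 𝒰 ⊗[K] 𝒰) : u13 K L (r + s) = u13 K L r + u13 K L s := by
  simp only [u13, add_tmul, map_add]

theorem u23_add (r s : 𝒰 ⊗[K] 𝒰) : u23 K L (r + s) = u23 K L r + u23 K L s :=
  tmul_add _ _ _

theorem u23_neg (r : 𝒰 ⊗[K] 𝒰) : u23 K L (-r) = -u23 K L r :=
  tmul_neg _ _

theorem map_id_τU_u13 (r : 𝒰 ⊗[K] 𝒰) :
    Algebra.TensorProduct.map (AlgHom.id K 𝒰) (τU K L).toAlgHom (u13 K L r) = u12 K L r := by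
  rw [u13, ← AlgHom.comp_apply, ← Algebra.TensorProduct.map_id_comp]
  have : (τU K L).toAlgHom.comp (τU K L).toAlgHom = AlgHom.id K (𝒰 ⊗[K] 𝒰) := by
    ext <;> simp [τU]
  rw [this, Algebra.TensorProduct.map_id, AlgHom.id_apply, u12]

theorem map_id_τU_u23 (r : 𝒰 ⊗[K] 𝒰) :
    Algebra.TensorProduct.map (AlgHom.id K 𝒰) (τU K L).toAlgHom (u23 K L r) = u23 K L (τU K L r) :=
  Algebra.TensorProduct.map_tmul _ _ _ _

theorem map_id_Δ_of_mem_range {Δ : 𝒰 →ₐ[K] 𝒰 ⊗[K] 𝒰}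
    (hΔ : ∀ x : L, Δ (ιU K L x) = ιU K L x ⊗ₜ[K] 1 + 1 ⊗ₜ[K] ιU K L x) {Y : 𝒰 ⊗[K] 𝒰}
    (hY : Y ∈ LinearMap.range (ιι K L)) :
    Algebra.TensorProduct.map (AlgHom.id K 𝒰) Δ Y = u12 K L Y + u13 K L Y := by
  obtain ⟨t, rfl⟩ := hY
  induction t using TensorProduct.induction_on with
  | zero => simp [u12, u13]
  | tmul a b => simp [ιι, hΔ, u12, u13, αU, τU, tmul_add]
  | add t t' ht ht' =>
    rw [map_add, map_add, ht, ht', u12_add, u13_add]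
    abel

theorem αU_map_Δ_id_of_mem_range {Δ : 𝒰 →ₐ[K] 𝒰 ⊗[K] 𝒰}
    (hΔ : ∀ x : L, Δ (ιU K L x) = ιU K L x ⊗ₜ[K] 1 + 1 ⊗ₜ[K] ιU K L x) {Y : 𝒰 ⊗[K] 𝒰}
    (hY : Y ∈ LinearMap.range (ιι K L)) :
    αU K L (Algebra.TensorProduct.map Δ (AlgHom.id K 𝒰) Y) = u13 K L Y + u23 K L Y := by
  obtain ⟨t, rfl⟩ := hY
  induction t using TensorProduct.induction_on with
  | zero => simp [u13, u23]
  | tmul a b => simp [ιι, hΔ, u23, u13, αU, τU, add_tmul]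
  | add t t' ht ht' =>
    rw [map_add, map_add, map_add, ht, ht', u13_add, u23_add]
    abel

end

/-- For a `g`-invariant antisymmetric element `X` of the image of `g ⊗ g`
in `U(g) ⊗ U(g)`, one has `[X₁₃, X₂₃] = 0`. -/
theorem invariant_X13_X23_commute
    (Δ : Ug →ₐ[k] Ug ⊗[k] Ug)
    (hΔ : ∀ x : g, Δ (ιU k g x) = ιU k g x ⊗ₜ[k] 1 + 1 ⊗ₜ[k] ιU k g x)
    (X : Ug ⊗[k] Ug)
    (hXr : X ∈ LinearMap.range (ιι k g))
    (hXa : τU k g X = -X)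
    (hXinv : ∀ x : g, Δ (ιU k g x) * X = X * Δ (ιU k g x)) :
    u13 k g X * u23 k g X = u23 k g X * u13 k g X := by
  have hΔX : ∀ u, Commute (Δ u) X := UniversalEnvelopingAlgebra.commute_of_commute_ι hXinv
  have h₁ : Commute (u12 k g X + u13 k g X) (u23 k g X) := by
    rw [← map_id_Δ_of_mem_range hΔ hXr]
    exact Algebra.TensorProduct.commute_map_tmul (fun _ => Commute.one_right _) hΔX X
  have h₂ : Commute (u13 k g X + u23 k g X) (u12 k g X) := by
    rw [← αU_map_Δ_id_of_mem_range hΔ hXr]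
    exact ((Algebra.TensorProduct.commute_map_tmul hΔX (fun _ => Commute.one_right _) X).map
      (αU k g))
  have h₃ : Commute (u12 k g X - u23 k g X) (u13 k g X) := by
    have h := h₂.map (Algebra.TensorProduct.map (AlgHom.id k Ug) (τU k g).toAlgHom)
    rwa [map_add, map_id_τU_u13, map_id_τU_u23, hXa, u23_neg, ← sub_eq_add_neg] at h
  have : IsAddTorsionFree (Ug ⊗[k] (Ug ⊗[k] Ug)) := .of_isTorsionFree k _
  exact commute_iff_lie_eq.mpr <| lie_eq_zero_of_lie_add_eq_zero (commute_iff_lie_eq.mp h₁)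
    (commute_iff_lie_eq.mp h₂) (commute_iff_lie_eq.mp h₃)

end
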